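/- arXiv:2402.07077 — 3 statements merged into one kernel-verified Lean document; each statement's English description precedes it below -/
import Mathlib

section
/- For f(x) = (e^{1/(x−1)} − 1)·e^{−e^{1/(x−1)}/x} on (0,1), one has f′(x) < 0 for all x ∈ (0,1), and f′(x) → 0 as x → 0⁺ and as x → 1⁻; consequently sup_{(0,1)} |f′| < ∞. -/
open Set Filter
open scoped Topology

noncomputable section

/-- The transition profile of the cutoff function `I₀` on `(0,1)`. -/
def fprof : ℝ → ℝ := fun x =>
  (Real.exp (1 / (x - 1)) - 1) * Real.exp (-(Real.exp (1 / (x - 1))) / x)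

/-! With `t = 1/(x-1)` and `u = eᵗ`,
`f'(x) = u e^{-u/x} ((u-1)(x²-x+1) - x²) / (x²(x-1)²)`, and `0 < u < 1` on `(0,1)` makes the
bracket negative. As `x → 1⁻` this is `t² eᵗ` times a factor tending to `-2`, and as `x → 0⁺` it
is `s² e⁻ˢ` times a convergent factor, where `s = u/x → ∞`. Having finite limits at both ends,
the continuous function `f'` extends continuously to `[0,1]` and is therefore bounded. -/

theorem ContinuousOn.exists_norm_le_of_tendsto_Ioo {α E : Type*}
    [ConditionallyCompleteLinearOrder α] [TopologicalSpace α] [OrderTopology α]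
    [DenselyOrdered α] [NormedAddCommGroup E] {f : α → E} {a b : α} {la lb : E}
    (hf : ContinuousOn f (Ioo a b)) (ha : Tendsto f (𝓝[>] a) (𝓝 la))
    (hb : Tendsto f (𝓝[<] b) (𝓝 lb)) :
    ∃ M, ∀ x ∈ Ioo a b, ‖f x‖ ≤ M := by
  obtain ⟨M, hM⟩ :=
    isCompact_Icc.exists_bound_of_continuousOn (continuousOn_Icc_extendFrom_Ioo hf ha hb)
  exact ⟨M, fun x hx => extendFrom_extends hf x hx ▸ hM x (Ioo_subset_Icc_self hx)⟩

def cutoffExp (x : ℝ) : ℝ := Real.exp (1 / (x - 1))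

def fprofDeriv (x : ℝ) : ℝ :=
  cutoffExp x * Real.exp (-cutoffExp x / x) *
    ((cutoffExp x - 1) * (x ^ 2 - x + 1) - x ^ 2) / (x ^ 2 * (x - 1) ^ 2)

theorem hasDerivAt_cutoffExp {x : ℝ} (hx : x ≠ 1) :
    HasDerivAt cutoffExp (-cutoffExp x / (x - 1) ^ 2) x := by
  have h := (((hasDerivAt_id x).sub_const 1).inv (sub_ne_zero.2 hx)).exp
  convert h using 1
  · ext y; simp [cutoffExp]
  · simp only [cutoffExp, one_div, id_eq, Pi.inv_apply]
    ring

theorem hasDerivAt_fprof {x : ℝ} (hx₀ : x ≠ 0) (hx₁ : x ≠ 1) :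
    HasDerivAt fprof (fprofDeriv x) x := by
  have hu := hasDerivAt_cutoffExp hx₁
  have h : HasDerivAt (fun y => (cutoffExp y - 1) * Real.exp (-cutoffExp y / y)) _ x :=
    (hu.sub_const 1).fun_mul (hu.fun_neg.fun_div (hasDerivAt_id' x) hx₀).exp
  refine h.congr_deriv ?_
  have : x - 1 ≠ 0 := sub_ne_zero.2 hx₁
  simp only [fprofDeriv]
  field_simp
  ring

theorem fprofDeriv_neg {x : ℝ} (hx : x ∈ Ioo (0 : ℝ) 1) : fprofDeriv x < 0 := by
  obtain ⟨hx₀, hx₁⟩ := hx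
  have hu₀ : 0 < cutoffExp x := Real.exp_pos _
  have hu₁ : cutoffExp x < 1 := Real.exp_lt_one_iff.2 (one_div_neg.2 (by linarith))
  have hbracket : (cutoffExp x - 1) * (x ^ 2 - x + 1) - x ^ 2 < 0 := by
    nlinarith [mul_pos (sub_pos.2 hu₁) (by nlinarith : (0 : ℝ) < x ^ 2 - x + 1)]
  have hden : 0 < x ^ 2 * (x - 1) ^ 2 := by
    have : x - 1 ≠ 0 := by linarith
    positivity
  exact div_neg_of_neg_of_pos (mul_neg_of_pos_of_neg (by positivity) hbracket) hden

theorem continuousOn_fprofDeriv : ContinuousOn fprofDeriv (Ioo 0 1) := by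
  intro x hx
  have hx₀ : x ≠ 0 := hx.1.ne'
  have hx₁ : x - 1 ≠ 0 := sub_ne_zero.2 hx.2.ne
  have hden : x ^ 2 * (x - 1) ^ 2 ≠ 0 := by positivity
  unfold fprofDeriv cutoffExp
  exact ContinuousAt.continuousWithinAt (by fun_prop (disch := assumption))

theorem tendsto_one_div_sub_one_nhdsLT_one :
    Tendsto (fun x : ℝ => 1 / (x - 1)) (𝓝[<] 1) atBot := by
  have h : Tendsto (fun x : ℝ => x - 1) (𝓝[<] 1) (𝓝[<] 0) :=
    (sub_self (1 : ℝ)) ▸ (map_subRight_nhdsLT (c := (1 : ℝ)) (a := 1)).le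
  simpa only [Function.comp_def, one_div] using tendsto_inv_nhdsLT_zero.comp h

theorem tendsto_fprofDeriv_nhdsLT_one : Tendsto fprofDeriv (𝓝[<] 1) (𝓝 0) := by
  have ht := tendsto_one_div_sub_one_nhdsLT_one
  have hu : Tendsto cutoffExp (𝓝[<] 1) (𝓝 0) := Real.tendsto_exp_atBot.comp ht
  have hx : Tendsto id (𝓝[<] (1 : ℝ)) (𝓝 1) := nhdsWithin_le_nhds
  have hpeak : Tendsto (fun x => (1 / (x - 1)) ^ 2 * cutoffExp x) (𝓝[<] 1) (𝓝 0) := by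
    simpa [Function.comp_def, cutoffExp] using
      (Real.tendsto_pow_mul_exp_neg_atTop_nhds_zero 2).comp (tendsto_neg_atBot_atTop.comp ht)
  have hrest : Tendsto (fun x => Real.exp (-cutoffExp x / x) *
      ((cutoffExp x - 1) * (x ^ 2 - x + 1) - x ^ 2) / x ^ 2) (𝓝[<] 1) (𝓝 (-2)) := by
    have := ((hu.neg.div hx one_ne_zero).rexp.mul
      (((hu.sub_const 1).mul (((hx.pow 2).sub hx).add_const 1)).sub (hx.pow 2))).div
      (hx.pow 2) (by norm_num)
    norm_num at this
    exact this
  have := hpeak.mul hrest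
  rw [zero_mul] at this
  refine this.congr fun x => ?_
  simp only [fprofDeriv, div_eq_mul_inv, mul_inv, one_mul, inv_pow]
  ring

theorem tendsto_fprofDeriv_nhdsGT_zero : Tendsto fprofDeriv (𝓝[>] 0) (𝓝 0) := by
  have hx : Tendsto id (𝓝[>] (0 : ℝ)) (𝓝 0) := nhdsWithin_le_nhds
  have hu : Tendsto cutoffExp (𝓝[>] 0) (𝓝 (Real.exp (-1))) := by
    have : ContinuousAt cutoffExp 0 := by unfold cutoffExp; fun_prop (disch := norm_num)
    simpa [cutoffExp] using this.tendsto.mono_left nhdsWithin_le_nhds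
  have hs : Tendsto (fun x => cutoffExp x / x) (𝓝[>] 0) atTop := by
    simpa only [div_eq_mul_inv] using
      hu.pos_mul_atTop (Real.exp_pos (-1)) tendsto_inv_nhdsGT_zero
  have hpeak := (Real.tendsto_pow_mul_exp_neg_atTop_nhds_zero 2).comp hs
  have hrest := (((hu.sub_const 1).mul (((hx.pow 2).sub hx).add_const 1)).sub (hx.pow 2)).div
    (hu.mul ((hx.sub_const 1).pow 2)) (by positivity)
  have := hpeak.mul hrest
  rw [zero_mul] at this
  refine this.congr' ?_
  filter_upwards [self_mem_nhdsWithin] with x (hx₀ : 0 < x)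
  have : cutoffExp x ≠ 0 := (Real.exp_pos _).ne'
  simp only [fprofDeriv, Function.comp_apply, Pi.div_apply, id]
  field_simp

/-- `fprof′ < 0` on `(0,1)`, `fprof′ → 0` at `0⁺` and at `1⁻`, and consequently
`fprof′` is bounded on `(0,1)`. -/
theorem stmt9 :
    (∀ x ∈ Set.Ioo (0:ℝ) 1, deriv fprof x < 0) ∧
    Tendsto (deriv fprof) (𝓝[>] (0:ℝ)) (𝓝 0) ∧
    Tendsto (deriv fprof) (𝓝[<] (1:ℝ)) (𝓝 0) ∧
    ∃ M : ℝ, ∀ x ∈ Set.Ioo (0:ℝ) 1, |deriv fprof x| ≤ M := by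
  have hderiv : EqOn (deriv fprof) fprofDeriv (Ioo 0 1) := fun x hx =>
    (hasDerivAt_fprof hx.1.ne' hx.2.ne).deriv
  have h₀ : Tendsto (deriv fprof) (𝓝[>] 0) (𝓝 0) := tendsto_fprofDeriv_nhdsGT_zero.congr'
    (hderiv.symm.eventuallyEq_of_mem (Ioo_mem_nhdsGT zero_lt_one))
  have h₁ : Tendsto (deriv fprof) (𝓝[<] 1) (𝓝 0) := tendsto_fprofDeriv_nhdsLT_one.congr'
    (hderiv.symm.eventuallyEq_of_mem (Ioo_mem_nhdsLT zero_lt_one))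
  refine ⟨fun x hx => hderiv hx ▸ fprofDeriv_neg hx, h₀, h₁, ?_⟩
  exact (continuousOn_fprofDeriv.congr hderiv).exists_norm_le_of_tendsto_Ioo h₀ h₁
end
end

section
/- For f : ℓ² → ℝ bounded and uniformly continuous and t > 0, the inf-convolution satisfies f − w_f(2√(t·sup|f|)) ≤ U_t f ≤ f on ℓ². -/
open MeasureTheory Metric Complex Set Bornology
open scoped ENNReal NNReal Real

noncomputable section

abbrev l2 : Type := lp (fun _ : ℕ => ℂ) 2

/-- The Lasry–Lions inf-convolution `(U_t f)(z) = inf_ζ { f(ζ) + ‖z − ζ‖²/(2t) }`. -/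
def infConv (f : l2 → ℝ) (t : ℝ) (z : l2) : ℝ :=
  ⨅ ζ : l2, (f ζ + ‖z - ζ‖ ^ 2 / (2 * t))

/-- The modulus of continuity `w_f(s) = sup { |f(z) − f(w)| : ‖z − w‖ ≤ s }`. -/
def modulus (f : l2 → ℝ) (s : ℝ) : ℝ :=
  sSup {d : ℝ | ∃ z w : l2, ‖z - w‖ ≤ s ∧ d = |f z - f w|}

/-! Every `ζ` competes with `ζ = z` in the infimum. If `‖z - ζ‖ ≤ 2√(t M)`, with `M = sup |f|`, then
`f z - f ζ` is at most the modulus at that radius; otherwise the penalty `‖z - ζ‖² / (2t)` already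
exceeds `2M ≥ f z - f ζ`. -/

section

variable {f : l2 → ℝ}

lemma sub_le_two_mul_iSup_abs (hf : BddAbove (range fun w => |f w|)) (z w : l2) :
    f z - f w ≤ 2 * ⨆ w, |f w| := by
  have hz := le_ciSup hf z
  have hw := le_ciSup hf w
  linarith [le_abs_self (f z), neg_abs_le (f w)]

lemma abs_sub_le_modulus (hf : BddAbove (range fun w => |f w|)) {s : ℝ} {z w : l2}
    (h : ‖z - w‖ ≤ s) : |f z - f w| ≤ modulus f s := by
  refine le_csSup ⟨2 * ⨆ w, |f w|, ?_⟩ ⟨z, w, h, rfl⟩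
  rintro d ⟨z, w, -, rfl⟩
  rw [abs_le]
  constructor <;> linarith [sub_le_two_mul_iSup_abs hf z w, sub_le_two_mul_iSup_abs hf w z]

lemma modulus_nonneg (hf : BddAbove (range fun w => |f w|)) {s : ℝ} (hs : 0 ≤ s) :
    0 ≤ modulus f s := by
  simpa using abs_sub_le_modulus (f := f) (z := 0) (w := 0) hf (by simpa using hs)

lemma infConv_le (hf : BddAbove (range fun w => |f w|)) {t : ℝ} (ht : 0 ≤ t) (z : l2) :
    infConv f t z ≤ f z := by
  have hbdd : BddBelow (range fun ζ => f ζ + ‖z - ζ‖ ^ 2 / (2 * t)) := by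
    refine ⟨-⨆ w, |f w|, ?_⟩
    rintro _ ⟨ζ, rfl⟩
    have : 0 ≤ ‖z - ζ‖ ^ 2 / (2 * t) := by positivity
    linarith [neg_abs_le (f ζ), le_ciSup hf ζ]
  simpa [infConv] using ciInf_le hbdd z

lemma two_mul_le_sq_div_of_two_mul_sqrt_le {t M r : ℝ} (ht : 0 < t) (hM : 0 ≤ M)
    (h : 2 * √(t * M) ≤ r) : 2 * M ≤ r ^ 2 / (2 * t) := by
  have hsq : (2 * √(t * M)) ^ 2 = 4 * (t * M) := by
    rw [mul_pow, Real.sq_sqrt (by positivity)]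
    ring
  have : 4 * (t * M) ≤ r ^ 2 := hsq ▸ pow_le_pow_left₀ (by positivity) h 2
  rw [le_div_iff₀ (by positivity)]
  linarith

lemma sub_modulus_le_infConv (hf : BddAbove (range fun w => |f w|)) {t : ℝ} (ht : 0 < t)
    (z : l2) : f z - modulus f (2 * √(t * ⨆ w, |f w|)) ≤ infConv f t z := by
  set s := 2 * √(t * ⨆ w, |f w|)
  refine le_ciInf fun ζ => ?_
  have hpen : 0 ≤ ‖z - ζ‖ ^ 2 / (2 * t) := by positivity
  rcases le_or_gt ‖z - ζ‖ s with hnear | hfar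
  · linarith [le_abs_self (f z - f ζ), abs_sub_le_modulus hf hnear]
  · have hM : 0 ≤ ⨆ w, |f w| := Real.iSup_nonneg fun w => abs_nonneg (f w)
    linarith [modulus_nonneg hf (s := s) (by positivity), sub_le_two_mul_iSup_abs hf z ζ,
      two_mul_le_sq_div_of_two_mul_sqrt_le ht hM hfar.le]

end

theorem stmt13_general (f : l2 → ℝ) (hb : ∃ M : ℝ, ∀ z : l2, |f z| ≤ M)
    (t : ℝ) (ht : 0 < t) :
    ∀ z : l2,
      f z - modulus f (2 * Real.sqrt (t * ⨆ w : l2, |f w|)) ≤ infConv f t z ∧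
      infConv f t z ≤ f z := by
  obtain ⟨M, hM⟩ := hb
  have hf : BddAbove (range fun w => |f w|) := ⟨M, forall_mem_range.2 hM⟩
  exact fun z => ⟨sub_modulus_le_infConv hf ht z, infConv_le hf ht.le z⟩

/-- For `f` bounded and uniformly continuous and `t > 0`,
`f − w_f(2√(t·sup|f|)) ≤ U_t f ≤ f` on ℓ². -/
theorem stmt13 (f : l2 → ℝ) (hb : ∃ M : ℝ, ∀ z : l2, |f z| ≤ M)
    (hu : UniformContinuous f) (t : ℝ) (ht : 0 < t) :
    ∀ z : l2,
      f z - modulus f (2 * Real.sqrt (t * ⨆ w : l2, |f w|)) ≤ infConv f t z ∧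
      infConv f t z ≤ f z :=
  stmt13_general f hb t ht
end
end

section
/- For f : ℓ² → ℝ bounded and uniformly continuous and t > 0, the function z ↦ (U_t f)(z) − ‖z‖²/(2t) is anti-plurisubharmonic on ℓ², i.e., its negative is plurisubharmonic: for all a, b ∈ ℓ² and r > 0, (U_t f)(a) − ‖a‖²/(2t) ≥ (1/2π)∫₀^{2π} [(U_t f)(a + r e^{iθ} b) − ‖a + r e^{iθ} b‖²/(2t)] dθ. -/
open MeasureTheory Metric Complex Set Bornology
open scoped ENNReal NNReal Real InnerProductSpace

noncomputable section

/-! Subtracting `‖z‖²/(2t)` turns `U_t f` into an infimum over `ζ` of the functions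
`z ↦ f ζ + ‖ζ‖²/(2t) − Re⟪ζ, z⟫/t`. Along every complex line `w ↦ a + w • b` these are real
parts of affine holomorphic functions, so they satisfy the mean value property on circles, and
their infimum satisfies the super-mean-value inequality. Uniform continuity of `f` makes `U_t f`
continuous, so that the circle averages are genuine integrals. -/

theorem Differentiable.circleAverage_re {φ : ℂ → ℂ} (hφ : Differentiable ℂ φ) (c : ℂ) (R : ℝ) :
    Real.circleAverage (fun w => (φ w).re) c R = (φ c).re := by
  rw [show (fun w => (φ w).re) = reCLM ∘ φ from rfl,
    reCLM.circleAverage_comp_comm hφ.continuous.continuousOn.circleIntegrable',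
    hφ.diffContOnCl.circleAverage, reCLM_apply]

section InfConv

variable {f : l2 → ℝ} {t : ℝ}

theorem infConv_le_s15 (hf : BddBelow (range f)) (ht : 0 ≤ t) (z ζ : l2) :
    infConv f t z ≤ f ζ + ‖z - ζ‖ ^ 2 / (2 * t) := by
  refine ciInf_le ?_ ζ
  obtain ⟨m, hm⟩ := hf
  refine ⟨m, ?_⟩
  rintro _ ⟨ζ, rfl⟩
  have : 0 ≤ ‖z - ζ‖ ^ 2 / (2 * t) := by positivity
  linarith [hm (mem_range_self ζ)]

theorem infConv_le_infConv_add {ε : ℝ} (hf : BddBelow (range f)) (ht : 0 ≤ t) {u v : l2}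
    (hε : ∀ ζ, f (ζ + (u - v)) ≤ f ζ + ε) : infConv f t u ≤ infConv f t v + ε := by
  rw [← sub_le_iff_le_add]
  refine le_ciInf fun ζ => ?_
  have h := infConv_le_s15 hf ht u (ζ + (u - v))
  rw [show u - (ζ + (u - v)) = v - ζ by abel] at h
  linarith [hε ζ]

theorem uniformContinuous_infConv (hf : BddBelow (range f)) (hu : UniformContinuous f)
    (ht : 0 ≤ t) : UniformContinuous (infConv f t) := by
  rw [Metric.uniformContinuous_iff] at hu ⊢
  intro ε hε
  obtain ⟨δ, hδ, hfδ⟩ := hu (ε / 2) (half_pos hε)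
  refine ⟨δ, hδ, fun {u v} huv => ?_⟩
  have shift : ∀ {x y : l2}, dist x y < δ → ∀ ζ, f (ζ + (x - y)) ≤ f ζ + ε / 2 := by
    intro x y hxy ζ
    have h := hfδ (a := ζ + (x - y)) (b := ζ) (by simpa [dist_eq_norm] using hxy)
    linarith [(abs_lt.mp (Real.dist_eq _ _ ▸ h)).2]
  have h₁ := infConv_le_infConv_add hf ht (shift huv)
  have h₂ := infConv_le_infConv_add hf ht (shift (dist_comm u v ▸ huv))
  rw [Real.dist_eq, abs_lt]
  constructor <;> linarith

theorem sq_norm_sub_div (z ζ : l2) : ‖z - ζ‖ ^ 2 / (2 * t) =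
    ‖z‖ ^ 2 / (2 * t) + (‖ζ‖ ^ 2 / (2 * t) - (⟪ζ, z⟫_ℂ).re / t) := by
  rw [norm_sub_rev, norm_sub_sq (𝕜 := ℂ), RCLike.re_to_complex]
  ring

theorem infConv_sub_sq_le (hf : BddBelow (range f)) (ht : 0 ≤ t) (z ζ : l2) :
    infConv f t z - ‖z‖ ^ 2 / (2 * t) ≤ f ζ + ‖ζ‖ ^ 2 / (2 * t) - (⟪ζ, z⟫_ℂ).re / t := by
  linarith [infConv_le_s15 hf ht z ζ, sq_norm_sub_div (t := t) z ζ]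

theorem le_infConv_sub_sq {c : ℝ} {z : l2}
    (h : ∀ ζ, c ≤ f ζ + ‖ζ‖ ^ 2 / (2 * t) - (⟪ζ, z⟫_ℂ).re / t) :
    c ≤ infConv f t z - ‖z‖ ^ 2 / (2 * t) := by
  rw [le_sub_iff_add_le]
  exact le_ciInf fun ζ => by linarith [h ζ, sq_norm_sub_div (t := t) z ζ]

theorem circleAverage_infConv_sub_sq_le (hf : BddBelow (range f)) (hu : UniformContinuous f)
    (ht : 0 ≤ t) (a b : l2) (c : ℂ) (R : ℝ) :
    Real.circleAverage (fun w => infConv f t (a + w • b) - ‖a + w • b‖ ^ 2 / (2 * t)) c R ≤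
      infConv f t (a + c • b) - ‖a + c • b‖ ^ 2 / (2 * t) := by
  have hcont : Continuous fun w : ℂ => infConv f t (a + w • b) - ‖a + w • b‖ ^ 2 / (2 * t) := by
    have := (uniformContinuous_infConv hf hu ht).continuous
    fun_prop
  refine le_infConv_sub_sq fun ζ => ?_
  set φ : ℂ → ℂ := fun w => ((f ζ + ‖ζ‖ ^ 2 / (2 * t) : ℝ) : ℂ) - ⟪ζ, a + w • b⟫_ℂ / t
  have hφ : Differentiable ℂ φ :=
    (differentiable_const _).sub (((innerSL ℂ ζ).differentiable.comp
      (f := fun w : ℂ => a + w • b) (by fun_prop)).div_const _)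
  have hre : ∀ w, (φ w).re = f ζ + ‖ζ‖ ^ 2 / (2 * t) - (⟪ζ, a + w • b⟫_ℂ).re / t := fun w => by
    simp only [φ, sub_re, ofReal_re, div_ofReal_re]
  calc _ ≤ Real.circleAverage (fun w => (φ w).re) c R :=
        Real.circleAverage_mono hcont.continuousOn.circleIntegrable'
          (continuous_re.comp hφ.continuous).continuousOn.circleIntegrable'
          fun w _ => (hre w).symm ▸ infConv_sub_sq_le hf ht _ ζ
    _ = _ := by rw [hφ.circleAverage_re, hre]

end InfConv

/-- For `f` bounded and uniformly continuous and `t > 0`, the function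
`z ↦ (U_t f)(z) − ‖z‖²/(2t)` is anti-plurisubharmonic on ℓ²: it satisfies the
super-mean-value inequality on every circle. -/
theorem stmt15 (f : l2 → ℝ) (hb : ∃ M : ℝ, ∀ z : l2, |f z| ≤ M)
    (hu : UniformContinuous f) (t : ℝ) (ht : 0 < t) :
    ∀ a b : l2, ∀ r : ℝ, 0 < r →
      (1 / (2 * π)) * ∫ θ in (0:ℝ)..(2 * π),
          (infConv f t (a + ((r : ℂ) * Complex.exp ((θ : ℂ) * Complex.I)) • b) -
            ‖a + ((r : ℂ) * Complex.exp ((θ : ℂ) * Complex.I)) • b‖ ^ 2 / (2 * t)) ≤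
        infConv f t a - ‖a‖ ^ 2 / (2 * t) := by
  intro a b r _
  obtain ⟨M, hM⟩ := hb
  have hf : BddBelow (range f) := ⟨-M, by rintro _ ⟨ζ, rfl⟩; exact neg_le_of_abs_le (hM ζ)⟩
  simpa [Real.circleAverage_def, circleMap] using
    circleAverage_infConv_sub_sq_le hf hu ht.le a b 0 r
end
end
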